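/- Let e and f be orthogonal idempotents in a prime ring R such that the corner rings eRe and fRf are division rings. Then eRe and fRf are isomorphic as rings. -/

import Mathlib

/-- The additive subgroup underlying the corner ring `eRe`. -/
def cornerAddSubgroup {R : Type*} [Ring R] (e : R) : AddSubgroup R where
  carrier := {x | e * x * e = x}
  add_mem' := by intro a b ha hb; simp only [Set.mem_setOf_eq] at *; rw [mul_add, add_mul, ha, hb]
  zero_mem' := by simp
  neg_mem' := by intro a ha; simp only [Set.mem_setOf_eq] at *; rw [mul_neg, neg_mul, ha]

/-- The corner ring `eRe` associated with an idempotent `e` of a ring `R`: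
its elements are the `x ∈ R` with `e * x * e = x`. -/
def Corner {R : Type*} [Ring R] (e : R) (_he : e * e = e) : Type _ :=
  cornerAddSubgroup e

namespace Corner

variable {R : Type*} [Ring R] {e : R} {he : e * e = e}

theorem prop (a : Corner e he) : e * a.1 * e = a.1 := a.2

instance : AddCommGroup (Corner e he) :=
  inferInstanceAs (AddCommGroup (cornerAddSubgroup e))

theorem left_absorb (a : Corner e he) : e * a.1 = a.1 := by
  conv_lhs => rw [← prop a]
  rw [← mul_assoc, ← mul_assoc, he, prop a]

theorem right_absorb (a : Corner e he) : a.1 * e = a.1 := by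
  conv_lhs => rw [← prop a]
  rw [mul_assoc, mul_assoc, he, ← mul_assoc, prop a]

instance instRing : Ring (Corner e he) :=
  { (inferInstance : AddCommGroup (Corner e he)) with
    mul := fun a b => ⟨a.1 * b.1, by
      show e * (a.1 * b.1) * e = a.1 * b.1
      rw [mul_assoc, mul_assoc, right_absorb b, ← mul_assoc, left_absorb a]⟩
    one := ⟨e, by show e * e * e = e; rw [he, he]⟩
    mul_assoc := fun a b c => Subtype.ext (mul_assoc a.1 b.1 c.1)
    one_mul := fun a => Subtype.ext (left_absorb a)
    mul_one := fun a => Subtype.ext (right_absorb a)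
    left_distrib := fun a b c => Subtype.ext (mul_add a.1 b.1 c.1)
    right_distrib := fun a b c => Subtype.ext (add_mul a.1 b.1 c.1)
    zero_mul := fun a => Subtype.ext (zero_mul a.1)
    mul_zero := fun a => Subtype.ext (mul_zero a.1) }

@[simp] theorem val_mul (a b : Corner e he) : (a * b).1 = a.1 * b.1 := rfl
@[simp] theorem val_add (a b : Corner e he) : (a + b).1 = a.1 + b.1 := rfl
@[simp] theorem val_one : (1 : Corner e he).1 = e := rfl
@[simp] theorem val_zero : (0 : Corner e he).1 = 0 := rfl

end Corner

/-! If `e = p q` and `f = q p`, then `x ↦ q x p` is a ring isomorphism `eRe ≃ fRf` with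
inverse `y ↦ p y q`. In a prime ring there are `a ∈ eRf` and `b ∈ fRe` with `a b a ≠ 0`;
then `a b` and `b a` are nonzero in the division rings `eRe` and `fRf`, and with
`c = (a b)⁻¹` the elements `p = a`, `q = b c` satisfy `p q = e` and `q p = f`. -/

section Conjugation

variable {R : Type*} [Ring R] {e f p q x : R}

theorem mul_mul_mul_mul_eq_self (hpq : p * q = e) (hx : e * x * e = x) :
    p * (q * x * p) * q = x := by
  calc p * (q * x * p) * q = p * q * x * (p * q) := by simp only [mul_assoc]
    _ = x := by rw [hpq, hx]

theorem mul_mul_mem_corner (hpq : p * q = e) (hqp : q * p = f) (hx : e * x * e = x) :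
    f * (q * x * p) * f = q * x * p := by
  calc f * (q * x * p) * f = q * (p * (q * x * p) * q) * p := by
        rw [← hqp]; simp only [mul_assoc]
    _ = q * x * p := by rw [mul_mul_mul_mul_eq_self hpq hx]

end Conjugation

namespace Corner

variable {R : Type*} [Ring R] {e f : R} {he : e * e = e} {hf : f * f = f}

def ringEquivOfMulEq (p q : R) (hpq : p * q = e) (hqp : q * p = f) :
    Corner e he ≃+* Corner f hf where
  toFun x := ⟨q * x.1 * p, mul_mul_mem_corner hpq hqp (prop x)⟩
  invFun y := ⟨p * y.1 * q, mul_mul_mem_corner hqp hpq (prop y)⟩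
  left_inv x := Subtype.ext (mul_mul_mul_mul_eq_self hpq (prop x))
  right_inv y := Subtype.ext (mul_mul_mul_mul_eq_self hqp (prop y))
  map_mul' x y := Subtype.ext <| by
    calc q * (x.1 * y.1) * p = q * (x.1 * e) * y.1 * p := by
          rw [right_absorb]; simp only [mul_assoc]
      _ = q * (x.1 * (p * q)) * y.1 * p := by rw [hpq]
      _ = q * x.1 * p * (q * y.1 * p) := by simp only [mul_assoc]
  map_add' x y := Subtype.ext <| by
    change q * (x.1 + y.1) * p = q * x.1 * p + q * y.1 * p
    rw [mul_add, add_mul]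

end Corner

section PrimeRing

variable {R : Type*} [Ring R]

theorem exists_mul_mul_ne_zero_of_prime
    (hprime : ∀ a b : R, (∀ x : R, a * x * b = 0) → a = 0 ∨ b = 0)
    {a b : R} (ha : a ≠ 0) (hb : b ≠ 0) : ∃ x, a * x * b ≠ 0 := by
  by_contra! h
  exact (hprime a b h).elim ha hb

theorem exists_corner_mul_mul_ne_zero_of_prime
    (hprime : ∀ a b : R, (∀ x : R, a * x * b = 0) → a = 0 ∨ b = 0)
    {e f x y : R} (he : e * e = e) (hf : f * f = f) (hx : x * e = x) (hy : f * y = y)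
    (hx0 : x ≠ 0) (hy0 : y ≠ 0) : ∃ b, e * b = b ∧ b * f = b ∧ x * b * y ≠ 0 := by
  obtain ⟨v, hv⟩ := exists_mul_mul_ne_zero_of_prime hprime hx0 hy0
  refine ⟨e * v * f, by rw [← mul_assoc, ← mul_assoc, he], by rw [mul_assoc, hf], ?_⟩
  calc x * (e * v * f) * y = x * e * v * (f * y) := by simp only [mul_assoc]
    _ ≠ 0 := by rwa [hx, hy]

theorem exists_mul_eq_and_mul_eq_of_prime
    (hprime : ∀ a b : R, (∀ x : R, a * x * b = 0) → a = 0 ∨ b = 0)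
    {e f : R} (he : e * e = e) (hf : f * f = f) (hene : e ≠ 0) (hfne : f ≠ 0)
    (heD : ∀ x : R, e * x * e = x → x ≠ 0 → ∃ y : R, e * y * e = y ∧ x * y = e ∧ y * x = e)
    (hfD : ∀ x : R, f * x * f = x → x ≠ 0 → ∃ y : R, f * y * f = y ∧ x * y = f ∧ y * x = f) :
    ∃ p q : R, p * q = e ∧ q * p = f := by
  obtain ⟨a, hea, haf, heaf⟩ :=
    exists_corner_mul_mul_ne_zero_of_prime hprime he hf he hf hene hfne
  have ha0 : a ≠ 0 := by rwa [hea, haf] at heaf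
  obtain ⟨b, hfb, hbe, haba⟩ :=
    exists_corner_mul_mul_ne_zero_of_prime hprime hf he haf hea ha0 ha0
  have hab : e * (a * b) * e = a * b := by rw [← mul_assoc, hea, mul_assoc, hbe]
  have hba : f * (b * a) * f = b * a := by rw [← mul_assoc, hfb, mul_assoc, haf]
  obtain ⟨c, -, habc, hcab⟩ := heD (a * b) hab (left_ne_zero_of_mul haba)
  obtain ⟨d, -, hbad, -⟩ := hfD (b * a) hba (right_ne_zero_of_mul (by rwa [mul_assoc] at haba))
  refine ⟨a, b * c, by rw [← mul_assoc, habc], ?_⟩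
  calc b * c * a = b * c * a * (b * a * d) := by rw [hbad, mul_assoc _ a f, haf]
    _ = b * (c * (a * b)) * a * d := by simp only [mul_assoc]
    _ = f := by rw [hcab, hbe, hbad]

end PrimeRing

theorem corner_ringEquiv_corner_general (R : Type*) [Ring R]
    (hprime : ∀ a b : R, (∀ x : R, a * x * b = 0) → a = 0 ∨ b = 0)
    (e f : R) (he : e * e = e) (hf : f * f = f)
    (hene : e ≠ 0) (hfne : f ≠ 0)
    (heD : ∀ x : R, e * x * e = x → x ≠ 0 → ∃ y : R, e * y * e = y ∧ x * y = e ∧ y * x = e)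
    (hfD : ∀ x : R, f * x * f = x → x ≠ 0 → ∃ y : R, f * y * f = y ∧ x * y = f ∧ y * x = f) :
    Nonempty (Corner e he ≃+* Corner f hf) := by
  obtain ⟨p, q, hpq, hqp⟩ := exists_mul_eq_and_mul_eq_of_prime hprime he hf hene hfne heD hfD
  exact ⟨Corner.ringEquivOfMulEq p q hpq hqp⟩

/-- Let `e` and `f` be orthogonal idempotents in a prime ring `R` such that the corner
rings `eRe` and `fRf` are division rings (they are nonzero and every nonzero element has a
two-sided inverse with respect to the respective unity).  Then `eRe ≅ fRf` as rings. -/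
theorem corner_ringEquiv_corner (R : Type*) [Ring R]
    (hprime : ∀ a b : R, (∀ x : R, a * x * b = 0) → a = 0 ∨ b = 0)
    (e f : R) (he : e * e = e) (hf : f * f = f) (hef : e * f = 0) (hfe : f * e = 0)
    (hene : e ≠ 0) (hfne : f ≠ 0)
    (heD : ∀ x : R, e * x * e = x → x ≠ 0 → ∃ y : R, e * y * e = y ∧ x * y = e ∧ y * x = e)
    (hfD : ∀ x : R, f * x * f = x → x ≠ 0 → ∃ y : R, f * y * f = y ∧ x * y = f ∧ y * x = f) :
    Nonempty (Corner e he ≃+* Corner f hf) :=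
  corner_ringEquiv_corner_general R hprime e f he hf hene hfne heD hfD
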